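/- Let f : ℝ^d → [0,∞) be an upper semi-continuous log-concave function with finite integral. Then the function z ↦ ∫_{ℝ^d} L_∞(f(·+z)) is convex on the interior of the support of f, and its reciprocal is log-concave there. -/

import Mathlib

/-!
Translating `f` multiplies its polar transform by a character,
`L_∞(f(· + z))(y) = e^{⟪z, y⟫} L_∞ f (y)`, so the function in question is the Laplace transform
`z ↦ ∫ e^{⟪z, y⟫} g(y) dy` of `g = L_∞ f ≥ 0`. By Hölder's inequality a Laplace transform is
log-convex where it is finite, and log-convexity gives both convexity and the log-concavity of the
reciprocal. It is finite on the interior of the support: if the closed `ε`-ball about `z` lies in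
the support, testing the infimum defining `L_∞ f (y)` at finitely many points `z + ε v`, with
`‖v‖ ≤ 1` and `‖y‖ ≤ 2 ⟪v, y⟫` for one of them, gives `e^{⟪z, y⟫} L_∞ f (y) ≤ C e^{-ε ‖y‖ / 2}`.
-/

open MeasureTheory Set

variable {d : ℕ}

/-- The polar (log-conjugate) transform of a nonnegative function. -/
noncomputable def polarT (f : EuclideanSpace ℝ (Fin d) → ℝ)
    (y : EuclideanSpace ℝ (Fin d)) : ℝ :=
  ⨅ x : {x : EuclideanSpace ℝ (Fin d) // 0 < f x},
    Real.exp (-(inner ℝ (x : EuclideanSpace ℝ (Fin d)) y : ℝ)) / f x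

open Real
open scoped RealInnerProductSpace

theorem integral_rpow_mul_rpow_le {α : Type*} [MeasurableSpace α] {μ : Measure α}
    {u v : α → ℝ} (hu₀ : 0 ≤ u) (hv₀ : 0 ≤ v) (hu : Integrable u μ) (hv : Integrable v μ)
    {p q : ℝ} (hp : 0 ≤ p) (hq : 0 ≤ q) (hpq : p + q = 1) :
    ∫ x, u x ^ p * v x ^ q ∂μ ≤ (∫ x, u x ∂μ) ^ p * (∫ x, v x ∂μ) ^ q := by
  have hlhs : 0 ≤ᵐ[μ] fun x => u x ^ p * v x ^ q :=
    .of_forall fun x => mul_nonneg (rpow_nonneg (hu₀ x) p) (rpow_nonneg (hv₀ x) q)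
  rw [integral_eq_lintegral_of_nonneg_ae hlhs
      ((hu.aemeasurable.pow_const p).mul (hv.aemeasurable.pow_const q)).aestronglyMeasurable,
    integral_eq_lintegral_of_nonneg_ae (.of_forall hu₀) hu.aestronglyMeasurable,
    integral_eq_lintegral_of_nonneg_ae (.of_forall hv₀) hv.aestronglyMeasurable,
    ENNReal.toReal_rpow, ENNReal.toReal_rpow, ← ENNReal.toReal_mul]
  have hfin : (∫⁻ x, .ofReal (u x) ∂μ) ^ p * (∫⁻ x, .ofReal (v x) ∂μ) ^ q ≠ ⊤ :=
    ENNReal.mul_ne_top (ENNReal.rpow_ne_top_of_nonneg hp hu.lintegral_lt_top.ne)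
      (ENNReal.rpow_ne_top_of_nonneg hq hv.lintegral_lt_top.ne)
  refine ENNReal.toReal_mono hfin (le_of_eq_of_le (lintegral_congr fun x => ?_)
    (ENNReal.lintegral_mul_norm_pow_le hu.aemeasurable.ennreal_ofReal
      hv.aemeasurable.ennreal_ofReal hp hq hpq))
  rw [ENNReal.ofReal_mul (rpow_nonneg (hu₀ x) p), ENNReal.ofReal_rpow_of_nonneg (hu₀ x) hp,
    ENNReal.ofReal_rpow_of_nonneg (hv₀ x) hq]

section Laplace

variable {E : Type*} [NormedAddCommGroup E] [InnerProductSpace ℝ E] [MeasurableSpace E]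
  {μ : Measure E} {g : E → ℝ}

theorem integral_exp_inner_mul_le (hg : 0 ≤ g) {z₁ z₂ : E}
    (h₁ : Integrable (fun y => exp ⟪z₁, y⟫ * g y) μ)
    (h₂ : Integrable (fun y => exp ⟪z₂, y⟫ * g y) μ) {a b : ℝ} (ha : 0 ≤ a) (hb : 0 ≤ b)
    (hab : a + b = 1) :
    ∫ y, exp ⟪a • z₁ + b • z₂, y⟫ * g y ∂μ ≤
      (∫ y, exp ⟪z₁, y⟫ * g y ∂μ) ^ a * (∫ y, exp ⟪z₂, y⟫ * g y ∂μ) ^ b := by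
  have hnonneg (z : E) : 0 ≤ fun y => exp ⟪z, y⟫ * g y :=
    fun y => mul_nonneg (exp_pos _).le (hg y)
  refine le_of_eq_of_le (integral_congr_ae (.of_forall fun y => ?_))
    (integral_rpow_mul_rpow_le (hnonneg z₁) (hnonneg z₂) h₁ h₂ ha hb hab)
  dsimp only
  rw [mul_rpow (exp_pos _).le (hg y), mul_rpow (exp_pos _).le (hg y), mul_mul_mul_comm,
    ← rpow_add' (hg y) (by simp [hab]), hab, rpow_one, ← exp_mul, ← exp_mul, ← exp_add,
    inner_add_left, real_inner_smul_left, real_inner_smul_left, mul_comm ⟪z₁, y⟫,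
    mul_comm ⟪z₂, y⟫]

theorem integral_exp_inner_mul_eq_zero_iff (hg : 0 ≤ g) {z : E}
    (hz : Integrable (fun y => exp ⟪z, y⟫ * g y) μ) :
    ∫ y, exp ⟪z, y⟫ * g y ∂μ = 0 ↔ g =ᵐ[μ] 0 := by
  rw [integral_eq_zero_iff_of_nonneg (fun y => mul_nonneg (exp_pos _).le (hg y)) hz]
  exact Filter.eventually_congr (.of_forall fun y => by simp [(exp_pos _).ne'])

end Laplace

section MultiplicativelyConvex

variable {E : Type*} [AddCommGroup E] [Module ℝ E] {s : Set E} {F : E → ℝ}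

theorem convexOn_of_le_rpow_mul_rpow (hs : Convex ℝ s) (hF : ∀ x ∈ s, 0 ≤ F x)
    (h : ∀ x ∈ s, ∀ y ∈ s, ∀ a b : ℝ, 0 ≤ a → 0 ≤ b → a + b = 1 →
      F (a • x + b • y) ≤ F x ^ a * F y ^ b) :
    ConvexOn ℝ s F :=
  ⟨hs, fun x hx y hy a b ha hb hab =>
    (h x hx y hy a b ha hb hab).trans
      (geom_mean_le_arith_mean2_weighted ha hb (hF x hx) (hF y hy) hab)⟩

theorem concaveOn_log_inv_of_le_rpow_mul_rpow (hs : Convex ℝ s) (hF : ∀ x ∈ s, 0 < F x)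
    (h : ∀ x ∈ s, ∀ y ∈ s, ∀ a b : ℝ, 0 ≤ a → 0 ≤ b → a + b = 1 →
      F (a • x + b • y) ≤ F x ^ a * F y ^ b) :
    ConcaveOn ℝ s fun x => log (F x)⁻¹ := by
  refine ⟨hs, fun x hx y hy a b ha hb hab => ?_⟩
  have hlog := log_le_log (hF _ (hs hx hy ha hb hab)) (h x hx y hy a b ha hb hab)
  rw [log_mul (rpow_pos_of_pos (hF x hx) a).ne' (rpow_pos_of_pos (hF y hy) b).ne',
    log_rpow (hF x hx), log_rpow (hF y hy)] at hlog
  simp only [log_inv, smul_eq_mul]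
  linarith

theorem convex_support_of_logConcave {f : E → ℝ} (hf : ∀ x, 0 ≤ f x)
    (hlc : ∀ x y : E, ∀ t ∈ Icc (0 : ℝ) 1, f x ^ (1 - t) * f y ^ t ≤ f ((1 - t) • x + t • y)) :
    Convex ℝ (Function.support f) := by
  intro x hx y hy a b ha hb hab
  obtain rfl : a = 1 - b := by linarith
  have hpos : 0 < f x ^ (1 - b) * f y ^ b :=
    mul_pos (rpow_pos_of_pos ((hf x).lt_of_ne' hx) _) (rpow_pos_of_pos ((hf y).lt_of_ne' hy) _)
  exact (hpos.trans_le (hlc x y b ⟨hb, by linarith⟩)).ne'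

end MultiplicativelyConvex

theorem integrable_exp_neg_mul_norm {E : Type*} [NormedAddCommGroup E] [NormedSpace ℝ E]
    [FiniteDimensional ℝ E] [MeasurableSpace E] [BorelSpace E] (μ : Measure E)
    [μ.IsAddHaarMeasure] {a : ℝ} (ha : 0 < a) :
    Integrable (fun x => exp (-(a * ‖x‖))) μ := by
  rcases subsingleton_or_nontrivial E with hE | hE
  · exact (by fun_prop : Continuous fun x : E => exp (-(a * ‖x‖))).integrable_of_hasCompactSupport
      (.of_compactSpace _)
  · refine (integrable_fun_norm_addHaar μ (f := fun r => exp (-(a * r)))).2 ?_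
    refine (integrableOn_rpow_mul_exp_neg_mul_rpow (s := (Module.finrank ℝ E - 1 : ℕ))
      (neg_one_lt_zero.trans_le (Nat.cast_nonneg _)) one_pos ha).congr_fun (fun r _ => ?_)
      measurableSet_Ioi
    simp [rpow_natCast]

theorem exists_finset_norm_le_two_mul_inner (E : Type*) [NormedAddCommGroup E]
    [InnerProductSpace ℝ E] [FiniteDimensional ℝ E] :
    ∃ K : Finset E, (∀ v ∈ K, ‖v‖ ≤ 1) ∧ ∀ y : E, ∃ v ∈ K, ‖y‖ ≤ 2 * ⟪v, y⟫ := by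
  classical
  obtain ⟨K, hK⟩ := (isCompact_sphere (0 : E) 1).elim_finite_subcover
    (fun v : Metric.sphere (0 : E) 1 => {y | 1 / 2 < ⟪(v : E), y⟫})
    (fun v => isOpen_lt continuous_const (continuous_const.inner continuous_id))
    (fun y hy => mem_iUnion.2 ⟨⟨y, hy⟩, by
      norm_num [mem_sphere_zero_iff_norm.1 hy]⟩)
  refine ⟨insert 0 (K.map (.subtype _)), ?_, fun y => ?_⟩
  · simp only [Finset.mem_insert, Finset.mem_map, Function.Embedding.subtype_apply]
    rintro v (rfl | ⟨v, -, rfl⟩)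
    · simp
    · exact (mem_sphere_zero_iff_norm.1 v.2).le
  rcases eq_or_ne y 0 with rfl | hy
  · exact ⟨0, by simp, by simp⟩
  have hny : 0 < ‖y‖ := norm_pos_iff.2 hy
  obtain ⟨v, hvK, hv⟩ := mem_iUnion₂.1 (hK (show ‖y‖⁻¹ • y ∈ Metric.sphere (0 : E) 1 by
    simp [norm_smul, hny.ne']))
  refine ⟨v, Finset.mem_insert_of_mem (Finset.mem_map_of_mem _ hvK), ?_⟩
  rw [mem_ofPred_eq, real_inner_smul_right] at hv
  rw [← div_eq_inv_mul, lt_div_iff₀ hny] at hv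
  linarith

namespace polarT

variable {f : EuclideanSpace ℝ (Fin d) → ℝ}

theorem bddBelow_range (y : EuclideanSpace ℝ (Fin d)) :
    BddBelow (range fun x : {x // 0 < f x} => exp (-⟪(x : EuclideanSpace ℝ (Fin d)), y⟫) / f x) :=
  ⟨0, by rintro _ ⟨x, rfl⟩; exact div_nonneg (exp_pos _).le x.2.le⟩

theorem nonneg : 0 ≤ polarT f := fun _ =>
  Real.iInf_nonneg fun x => div_nonneg (exp_pos _).le x.2.le

theorem le_exp_div {x : EuclideanSpace ℝ (Fin d)} (hx : 0 < f x) (y : EuclideanSpace ℝ (Fin d)) :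
    polarT f y ≤ exp (-⟪x, y⟫) / f x :=
  ciInf_le (bddBelow_range y) ⟨x, hx⟩

theorem comp_add_right (z y : EuclideanSpace ℝ (Fin d)) :
    polarT (fun x => f (x + z)) y = exp ⟪z, y⟫ * polarT f y := by
  rw [polarT, polarT, mul_iInf_of_nonneg (exp_pos _).le,
    ← (Equiv.subtypeEquiv (q := fun u => 0 < f u) (Equiv.addRight z) fun x => Iff.rfl).iInf_comp]
  refine iInf_congr fun x => ?_
  change _ = exp ⟪z, y⟫ * (exp (-⟪(x : EuclideanSpace ℝ (Fin d)) + z, y⟫) / f (x + z))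
  rw [inner_add_left, neg_add, exp_add, exp_neg ⟪z, y⟫]
  field_simp

theorem upperSemicontinuous : UpperSemicontinuous (polarT f) :=
  upperSemicontinuous_ciInf bddBelow_range fun _ =>
    ((continuous_const.inner continuous_id).neg.rexp.div_const _).upperSemicontinuous

theorem exists_exp_inner_mul_le (hf : ∀ x, 0 ≤ f x) {z : EuclideanSpace ℝ (Fin d)}
    (hz : z ∈ interior (Function.support f)) :
    ∃ C a : ℝ, 0 < a ∧ ∀ y, exp ⟪z, y⟫ * polarT f y ≤ C * exp (-(a * ‖y‖)) := by
  classical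
  obtain ⟨ε, hε, hball⟩ := Metric.nhds_basis_closedBall.mem_iff.1 (mem_interior_iff_mem_nhds.1 hz)
  obtain ⟨K, hK₁, hK⟩ := exists_finset_norm_le_two_mul_inner (EuclideanSpace ℝ (Fin d))
  have hpos : ∀ v ∈ K, 0 < f (z + ε • v) := fun v hv => (hf _).lt_of_ne' <| hball <| by
    simpa [norm_smul, abs_of_pos hε] using mul_le_of_le_one_right hε.le (hK₁ v hv)
  obtain ⟨v₀, hv₀, hmin⟩ := K.exists_min_image (fun v => f (z + ε • v))
    (let ⟨v, hv, _⟩ := hK 0; ⟨v, hv⟩)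
  refine ⟨(f (z + ε • v₀))⁻¹, ε / 2, half_pos hε, fun y => ?_⟩
  obtain ⟨v, hv, hvy⟩ := hK y
  calc exp ⟪z, y⟫ * polarT f y ≤ exp ⟪z, y⟫ * (exp (-⟪z + ε • v, y⟫) / f (z + ε • v)) :=
        mul_le_mul_of_nonneg_left (le_exp_div (hpos v hv) y) (exp_pos _).le
    _ = exp (-(ε * ⟪v, y⟫)) / f (z + ε • v) := by
        rw [inner_add_left, real_inner_smul_left, neg_add, exp_add, ← mul_div_assoc,
          ← mul_assoc, ← exp_add, add_neg_cancel, exp_zero, one_mul]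
    _ ≤ exp (-(ε / 2 * ‖y‖)) / f (z + ε • v₀) :=
        div_le_div₀ (exp_pos _).le (exp_le_exp.2 (by nlinarith)) (hpos v₀ hv₀) (hmin v hv)
    _ = _ := div_eq_inv_mul _ _

theorem integrable_exp_inner_mul (hf : ∀ x, 0 ≤ f x) {z : EuclideanSpace ℝ (Fin d)}
    (hz : z ∈ interior (Function.support f)) :
    Integrable fun y => exp ⟪z, y⟫ * polarT f y := by
  obtain ⟨C, a, ha, hle⟩ := exists_exp_inner_mul_le hf hz
  refine ((integrable_exp_neg_mul_norm volume ha).const_mul C).mono'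
    ((continuous_const.inner continuous_id).rexp.measurable.mul
      upperSemicontinuous.measurable).aestronglyMeasurable (.of_forall fun y => ?_)
  rw [norm_of_nonneg (mul_nonneg (exp_pos _).le (nonneg y))]
  exact hle y

end polarT

theorem convexOn_integral_polar_shift_general (d : ℕ)
    (f : EuclideanSpace ℝ (Fin d) → ℝ) (hf : ∀ x, 0 ≤ f x)
    (hlc : ∀ x y : EuclideanSpace ℝ (Fin d), ∀ t ∈ Set.Icc (0 : ℝ) 1,
      f x ^ (1 - t) * f y ^ t ≤ f ((1 - t) • x + t • y)) :
    ConvexOn ℝ (interior (Function.support f))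
      (fun z => ∫ y, polarT (fun x => f (x + z)) y) ∧
    ConcaveOn ℝ (interior (Function.support f))
      (fun z => Real.log (∫ y, polarT (fun x => f (x + z)) y)⁻¹) := by
  set s := interior (Function.support f)
  have hs : Convex ℝ s := (convex_support_of_logConcave hf hlc).interior
  have hint (z) (hz : z ∈ s) : Integrable fun y => exp ⟪z, y⟫ * polarT f y :=
    polarT.integrable_exp_inner_mul hf hz
  have hmul : ∀ z₁ ∈ s, ∀ z₂ ∈ s, ∀ a b : ℝ, 0 ≤ a → 0 ≤ b → a + b = 1 →
      ∫ y, exp ⟪a • z₁ + b • z₂, y⟫ * polarT f y ≤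
        (∫ y, exp ⟪z₁, y⟫ * polarT f y) ^ a * (∫ y, exp ⟪z₂, y⟫ * polarT f y) ^ b :=
    fun z₁ h₁ z₂ h₂ _ _ ha hb hab =>
      integral_exp_inner_mul_le polarT.nonneg (hint z₁ h₁) (hint z₂ h₂) ha hb hab
  have hnonneg (z) : 0 ≤ ∫ y, exp ⟪z, y⟫ * polarT f y :=
    integral_nonneg fun y => mul_nonneg (exp_pos _).le (polarT.nonneg y)
  simp only [polarT.comp_add_right]
  refine ⟨convexOn_of_le_rpow_mul_rpow hs (fun z _ => hnonneg z) hmul, ?_⟩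
  -- Since `log 0 = 0`, the case where the transform vanishes identically is separate.
  by_cases hg : polarT f =ᵐ[volume] 0
  · refine (concaveOn_const 0 hs).congr fun z hz => ?_
    simp [(integral_exp_inner_mul_eq_zero_iff polarT.nonneg (hint z hz)).2 hg]
  · exact concaveOn_log_inv_of_le_rpow_mul_rpow hs (fun z hz => (hnonneg z).lt_of_ne'
      (mt (integral_exp_inner_mul_eq_zero_iff polarT.nonneg (hint z hz)).1 hg)) hmul

/-- For an upper semi-continuous log-concave `f` of finite integral, the function
`z ↦ ∫ L_∞ (f(·+z))` is convex on the interior of `supp f`, and its reciprocal is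
log-concave there. -/
theorem convexOn_integral_polar_shift (d : ℕ)
    (f : EuclideanSpace ℝ (Fin d) → ℝ) (hf : ∀ x, 0 ≤ f x)
    (husc : UpperSemicontinuous f)
    (hlc : ∀ x y : EuclideanSpace ℝ (Fin d), ∀ t ∈ Set.Icc (0 : ℝ) 1,
      f x ^ (1 - t) * f y ^ t ≤ f ((1 - t) • x + t • y))
    (hint : Integrable f) :
    ConvexOn ℝ (interior (Function.support f))
      (fun z => ∫ y, polarT (fun x => f (x + z)) y) ∧
    ConcaveOn ℝ (interior (Function.support f))
      (fun z => Real.log (∫ y, polarT (fun x => f (x + z)) y)⁻¹) :=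
  convexOn_integral_polar_shift_general d f hf hlc
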